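/- Let $1<p<d$ and let $f$ satisfy ($p$-homogeneity) and (G). Fix $T>r_0$, $\varepsilon_0>0$ and $R>1$ with $R-\varepsilon_0 T\ge 2$. Then there exists $c_2=c_2(p,d,r_0)>0$ such that for every $0<\varepsilon\le\varepsilon_0$ and every $z\in\mathbb{R}^m$: $\varphi_{\varepsilon,T,R}(z)\le c_2|z|^p$, where $\varphi_{\varepsilon,T,R}$ is the nonlocal capacitary density defined by $\varphi_{\varepsilon,T,R}(z)=\inf\{\mathcal F_\varepsilon^T(v,B_R): v\in L^p(B_R;\mathbb{R}^m),\ v\equiv 0\text{ in }B_1,\ v\equiv z\text{ on }\partial B_R+B_{\varepsilon T}\}$. -/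

import Mathlib

open MeasureTheory Metric ENNReal Set

/-- `M(ξ) = sup_{|z|=1} f(ξ,z)` (as an extended nonnegative real). -/
noncomputable def Msup {d m : ℕ} (f : EuclideanSpace ℝ (Fin d) → EuclideanSpace ℝ (Fin m) → ℝ)
    (ξ : EuclideanSpace ℝ (Fin d)) : ℝ≥0∞ :=
  ⨆ z ∈ sphere (0 : EuclideanSpace ℝ (Fin m)) 1, ENNReal.ofReal (f ξ z)

/-- The truncated convolution energy `𝓕_α^T(v, ℝ^d)`. -/
noncomputable def Ftrunc {d m : ℕ} (α T : ℝ)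
    (f : EuclideanSpace ℝ (Fin d) → EuclideanSpace ℝ (Fin m) → ℝ)
    (v : EuclideanSpace ℝ (Fin d) → EuclideanSpace ℝ (Fin m)) : ℝ≥0∞ :=
  ∫⁻ ξ in ball (0 : EuclideanSpace ℝ (Fin d)) T,
    ∫⁻ x, ENNReal.ofReal (f ξ ((α⁻¹ : ℝ) • (v (x + α • ξ) - v x)))

/-- The approximating capacitary density `φ_{α,T,R}(z)` (equivalent whole-space
formulation, with admissible functions extended by `z` outside `B_R`). -/
noncomputable def phiCap {d m : ℕ} (p α T R : ℝ)
    (f : EuclideanSpace ℝ (Fin d) → EuclideanSpace ℝ (Fin m) → ℝ)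
    (z : EuclideanSpace ℝ (Fin m)) : ℝ≥0∞ :=
  ⨅ v ∈ {v : EuclideanSpace ℝ (Fin d) → EuclideanSpace ℝ (Fin m) |
      MemLp (fun x => v x - z) (ENNReal.ofReal p) volume ∧
      (∀ᵐ x ∂(volume.restrict (ball (0 : EuclideanSpace ℝ (Fin d)) 1)), v x = 0) ∧
      (∀ x, x ∉ ball (0 : EuclideanSpace ℝ (Fin d)) (R - α * T) → v x = z)},
    Ftrunc α T f v

/-! Test the infimum with the radial ramp `v(x) = min(max(|x| - 1, 0), 1) z`, which vanishes on
`B_1`, equals `z` outside `B_2` and is `|z|`-Lipschitz. Its difference quotients are bounded by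
`|ξ| |z|` and vanish for `|x| ≥ 2 + ε|ξ|`, so by `p`-homogeneity the inner integral of the energy
is at most `|B_{2 + ε₀T}| |z|^p |ξ|^p M(ξ)`, and the moment bound (G) on `M` finishes. -/

section Homogeneous

variable {E : Type*} [NormedAddCommGroup E] [NormedSpace ℝ E] {p : ℝ}

theorem apply_zero_of_homogeneous {g : E → ℝ} (hp : 0 < p)
    (hhom : ∀ z (t : ℝ), 0 < t → g (t • z) = t ^ p * g z) : g 0 = 0 := by
  have h := hhom 0 2 two_pos
  rw [smul_zero] at h
  have h2 : (1 : ℝ) < 2 ^ p := Real.one_lt_rpow one_lt_two hp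
  have : ((2 : ℝ) ^ p - 1) * g 0 = 0 := by linarith
  exact (mul_eq_zero.mp this).resolve_left (sub_ne_zero.mpr h2.ne')

theorem apply_eq_norm_rpow_mul_apply_normalize {g : E → ℝ}
    (hhom : ∀ z (t : ℝ), 0 < t → g (t • z) = t ^ p * g z) {w : E} (hw : w ≠ 0) :
    g w = ‖w‖ ^ p * g (‖w‖⁻¹ • w) := by
  rw [← hhom _ _ (norm_pos_iff.mpr hw), smul_inv_smul₀ (norm_ne_zero_iff.mpr hw)]

end Homogeneous

theorem ofReal_le_norm_rpow_mul_Msup {d m : ℕ} {p : ℝ} (hp : 0 < p)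
    {f : EuclideanSpace ℝ (Fin d) → EuclideanSpace ℝ (Fin m) → ℝ}
    (hhom : ∀ ξ z (t : ℝ), 0 < t → f ξ (t • z) = t ^ p * f ξ z)
    (ξ : EuclideanSpace ℝ (Fin d)) (w : EuclideanSpace ℝ (Fin m)) :
    ENNReal.ofReal (f ξ w) ≤ ENNReal.ofReal (‖w‖ ^ p) * Msup f ξ := by
  rcases eq_or_ne w 0 with rfl | hw
  · simp [apply_zero_of_homogeneous hp (hhom ξ)]
  have hnw : 0 < ‖w‖ := norm_pos_iff.mpr hw
  have hsphere : ‖w‖⁻¹ • w ∈ sphere (0 : EuclideanSpace ℝ (Fin m)) 1 := by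
    rw [mem_sphere_zero_iff_norm, norm_smul, norm_inv, norm_norm, inv_mul_cancel₀ hnw.ne']
  rw [apply_eq_norm_rpow_mul_apply_normalize (hhom ξ) hw,
    ENNReal.ofReal_mul (Real.rpow_nonneg hnw.le p)]
  exact mul_le_mul_right
    (le_iSup₂ (f := fun z (_ : z ∈ sphere (0 : EuclideanSpace ℝ (Fin m)) 1) =>
      ENNReal.ofReal (f ξ z)) _ hsphere) _

section CapTestFunction

variable {E F : Type*} [NormedAddCommGroup E] [NormedAddCommGroup F] [NormedSpace ℝ F]

def capTestFunction (z : F) (x : E) : F := min (max (‖x‖ - 1) 0) 1 • z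

theorem capTestFunction_of_norm_le_one (z : F) {x : E} (hx : ‖x‖ ≤ 1) :
    capTestFunction z x = 0 := by
  simp [capTestFunction, max_eq_right (sub_nonpos.mpr hx)]

theorem capTestFunction_of_two_le_norm (z : F) {x : E} (hx : 2 ≤ ‖x‖) :
    capTestFunction z x = z := by
  simp [capTestFunction, min_eq_right (le_max_of_le_left (by linarith : (1 : ℝ) ≤ ‖x‖ - 1))]

theorem norm_capTestFunction_sub_le (z : F) (x y : E) :
    ‖capTestFunction z y - capTestFunction z x‖ ≤ ‖y - x‖ * ‖z‖ := by
  have hramp : LipschitzWith 1 fun t : ℝ => min (max (t - 1) 0) 1 :=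
    by simpa using ((LipschitzWith.id.sub (LipschitzWith.const 1)).max_const 0).min_const 1
  rw [capTestFunction, capTestFunction, ← sub_smul, norm_smul]
  gcongr
  calc ‖min (max (‖y‖ - 1) 0) 1 - min (max (‖x‖ - 1) 0) 1‖ ≤ ‖‖y‖ - ‖x‖‖ := by
        simpa [dist_eq_norm] using hramp.dist_le_mul ‖y‖ ‖x‖
    _ ≤ ‖y - x‖ := abs_norm_sub_norm_le y x

theorem capTestFunction_add_sub_eq_zero (z : F) {x y : E} (hx : 2 + ‖y‖ ≤ ‖x‖) :
    capTestFunction z (x + y) - capTestFunction z x = 0 := by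
  have hxy : 2 ≤ ‖x + y‖ := by
    have := norm_sub_norm_le x (-y)
    rw [sub_neg_eq_add, norm_neg] at this
    linarith
  rw [capTestFunction_of_two_le_norm z hxy,
    capTestFunction_of_two_le_norm z (by linarith [norm_nonneg y]), sub_self]

theorem continuous_capTestFunction (z : F) : Continuous (capTestFunction (E := E) z) := by
  unfold capTestFunction
  fun_prop

theorem hasCompactSupport_capTestFunction_sub [ProperSpace E] (z : F) :
    HasCompactSupport fun x : E => capTestFunction z x - z := by
  refine HasCompactSupport.intro (isCompact_closedBall (0 : E) 2) fun x hx => ?_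
  rw [mem_closedBall_zero_iff, not_le] at hx
  rw [capTestFunction_of_two_le_norm z hx.le, sub_self]

end CapTestFunction

section Energy

variable {d m : ℕ} {p ε : ℝ} {f : EuclideanSpace ℝ (Fin d) → EuclideanSpace ℝ (Fin m) → ℝ}

theorem norm_smul_capTestFunction_increment_le (hε : 0 < ε) (z : EuclideanSpace ℝ (Fin m))
    (x ξ : EuclideanSpace ℝ (Fin d)) :
    ‖ε⁻¹ • (capTestFunction z (x + ε • ξ) - capTestFunction z x)‖ ≤ ‖ξ‖ * ‖z‖ := by
  rw [norm_smul, norm_inv, Real.norm_of_nonneg hε.le, inv_mul_le_iff₀ hε]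
  calc ‖capTestFunction z (x + ε • ξ) - capTestFunction z x‖ ≤ ‖x + ε • ξ - x‖ * ‖z‖ :=
        norm_capTestFunction_sub_le z x _
    _ = ε * (‖ξ‖ * ‖z‖) := by
        rw [add_sub_cancel_left, norm_smul, Real.norm_of_nonneg hε.le, mul_assoc]

theorem ofReal_capTestFunction_increment_le (hp : 0 < p)
    (hhom : ∀ ξ z (t : ℝ), 0 < t → f ξ (t • z) = t ^ p * f ξ z) (hε : 0 < ε)
    (z : EuclideanSpace ℝ (Fin m)) (x ξ : EuclideanSpace ℝ (Fin d)) :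
    ENNReal.ofReal (f ξ (ε⁻¹ • (capTestFunction z (x + ε • ξ) - capTestFunction z x))) ≤
      ENNReal.ofReal (‖z‖ ^ p) * (Msup f ξ * ENNReal.ofReal (‖ξ‖ ^ p)) := by
  calc _ ≤ ENNReal.ofReal (‖ε⁻¹ • (capTestFunction z (x + ε • ξ) - capTestFunction z x)‖ ^ p) *
        Msup f ξ := ofReal_le_norm_rpow_mul_Msup hp hhom ξ _
    _ ≤ ENNReal.ofReal ((‖ξ‖ * ‖z‖) ^ p) * Msup f ξ := by
        gcongr
        exact norm_smul_capTestFunction_increment_le hε z x ξ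
    _ = _ := by
        rw [Real.mul_rpow (norm_nonneg ξ) (norm_nonneg z),
          ENNReal.ofReal_mul (Real.rpow_nonneg (norm_nonneg ξ) p)]
        ring

theorem lintegral_capTestFunction_increment_le (hp : 0 < p)
    (hhom : ∀ ξ z (t : ℝ), 0 < t → f ξ (t • z) = t ^ p * f ξ z) (hε : 0 < ε)
    (z : EuclideanSpace ℝ (Fin m)) {ξ : EuclideanSpace ℝ (Fin d)} {a : ℝ} (hξ : ε * ‖ξ‖ ≤ a) :
    ∫⁻ x, ENNReal.ofReal (f ξ (ε⁻¹ • (capTestFunction z (x + ε • ξ) - capTestFunction z x))) ≤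
      volume (ball (0 : EuclideanSpace ℝ (Fin d)) (2 + a)) * ENNReal.ofReal (‖z‖ ^ p) *
        (Msup f ξ * ENNReal.ofReal (‖ξ‖ ^ p)) := by
  have hsupp : ∀ x, ENNReal.ofReal
      (f ξ (ε⁻¹ • (capTestFunction z (x + ε • ξ) - capTestFunction z x))) ≤
      (ball 0 (2 + a)).indicator
        (fun _ => ENNReal.ofReal (‖z‖ ^ p) * (Msup f ξ * ENNReal.ofReal (‖ξ‖ ^ p))) x := by
    intro x
    by_cases hx : x ∈ ball (0 : EuclideanSpace ℝ (Fin d)) (2 + a)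
    · rw [indicator_of_mem hx]
      exact ofReal_capTestFunction_increment_le hp hhom hε z x ξ
    · rw [mem_ball_zero_iff, not_lt] at hx
      have hfar : 2 + ‖ε • ξ‖ ≤ ‖x‖ := by
        rw [norm_smul, Real.norm_of_nonneg hε.le]; linarith
      simp [capTestFunction_add_sub_eq_zero z hfar, apply_zero_of_homogeneous hp (hhom ξ)]
  calc _ ≤ _ := lintegral_mono hsupp
    _ = _ := by rw [lintegral_indicator_const measurableSet_ball, mul_comm, mul_assoc]

theorem Ftrunc_capTestFunction_le (hp : 0 < p)
    (hhom : ∀ ξ z (t : ℝ), 0 < t → f ξ (t • z) = t ^ p * f ξ z) (hε : 0 < ε)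
    (z : EuclideanSpace ℝ (Fin m)) {T a : ℝ} (hTa : ε * T ≤ a) :
    Ftrunc ε T f (capTestFunction z) ≤
      volume (ball (0 : EuclideanSpace ℝ (Fin d)) (2 + a)) * ENNReal.ofReal (‖z‖ ^ p) *
        ∫⁻ ξ, Msup f ξ * ENNReal.ofReal (‖ξ‖ ^ p) := by
  have hinner : ∀ ξ ∈ ball (0 : EuclideanSpace ℝ (Fin d)) T, ∫⁻ x, ENNReal.ofReal
      (f ξ (ε⁻¹ • (capTestFunction z (x + ε • ξ) - capTestFunction z x))) ≤
      volume (ball (0 : EuclideanSpace ℝ (Fin d)) (2 + a)) * ENNReal.ofReal (‖z‖ ^ p) *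
        (Msup f ξ * ENNReal.ofReal (‖ξ‖ ^ p)) := fun ξ hξ =>
    lintegral_capTestFunction_increment_le hp hhom hε z <|
      (mul_le_mul_of_nonneg_left (mem_ball_zero_iff.mp hξ).le hε.le).trans hTa
  calc Ftrunc ε T f (capTestFunction z) ≤ ∫⁻ ξ in ball 0 T,
        volume (ball (0 : EuclideanSpace ℝ (Fin d)) (2 + a)) * ENNReal.ofReal (‖z‖ ^ p) *
          (Msup f ξ * ENNReal.ofReal (‖ξ‖ ^ p)) := setLIntegral_mono' measurableSet_ball hinner
    _ ≤ _ := setLIntegral_le_lintegral _ _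
    _ = _ := lintegral_const_mul' _ _ (mul_ne_top measure_ball_lt_top.ne ofReal_ne_top)

end Energy

theorem phiCap_le_Ftrunc_capTestFunction {d m : ℕ} {p ε T R : ℝ}
    (f : EuclideanSpace ℝ (Fin d) → EuclideanSpace ℝ (Fin m) → ℝ) (z : EuclideanSpace ℝ (Fin m))
    (hR : 2 ≤ R - ε * T) :
    phiCap p ε T R f z ≤ Ftrunc ε T f (capTestFunction z) := by
  refine iInf₂_le _ ⟨?_, ?_, fun x hx => ?_⟩
  · exact (continuous_capTestFunction z).sub continuous_const
      |>.memLp_of_hasCompactSupport (hasCompactSupport_capTestFunction_sub z)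
  · exact (ae_restrict_iff' measurableSet_ball).mpr <| ae_of_all _ fun x hx =>
      capTestFunction_of_norm_le_one z (mem_ball_zero_iff.mp hx).le
  · rw [mem_ball_zero_iff, not_lt] at hx
    exact capTestFunction_of_two_le_norm z (hR.trans hx)

theorem ENNReal.exists_pos_mul_ofReal_le {C : ℝ≥0∞} (hC : C ≠ ⊤) :
    ∃ c : ℝ, 0 < c ∧ ∀ x : ℝ, 0 ≤ x → C * ENNReal.ofReal x ≤ ENNReal.ofReal (c * x) := by
  refine ⟨C.toReal + 1, by positivity, fun x hx => ?_⟩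
  rw [ENNReal.ofReal_mul (by positivity)]
  gcongr
  exact (ENNReal.le_ofReal_iff_toReal_le hC (by positivity)).mpr (by linarith)

theorem phiCap_upper_growth_general (d m : ℕ) (p : ℝ) (hp : 1 < p)
    (T r0 ε0 R : ℝ) (hr0 : 0 < r0) (hT : r0 < T)
    (hR : 2 ≤ R - ε0 * T)
    (f : EuclideanSpace ℝ (Fin d) → EuclideanSpace ℝ (Fin m) → ℝ)
    (hhom : ∀ ξ z (t : ℝ), 0 < t → f ξ (t • z) = t ^ p * f ξ z)
    (hG1 : (∫⁻ ξ, Msup f ξ * ENNReal.ofReal (‖ξ‖ ^ p + 1)) < ⊤) :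
    ∃ c₂ : ℝ, 0 < c₂ ∧ ∀ (ε : ℝ), 0 < ε → ε ≤ ε0 →
      ∀ z : EuclideanSpace ℝ (Fin m),
        phiCap p ε T R f z ≤ ENNReal.ofReal (c₂ * ‖z‖ ^ p) := by
  have hp0 : 0 < p := one_pos.trans hp
  set A := volume (ball (0 : EuclideanSpace ℝ (Fin d)) (2 + ε0 * T))
  set K := ∫⁻ ξ, Msup f ξ * ENNReal.ofReal (‖ξ‖ ^ p + 1)
  obtain ⟨c₂, hc₂, hle⟩ := ENNReal.exists_pos_mul_ofReal_le
    (mul_ne_top measure_ball_lt_top.ne hG1.ne : A * K ≠ ⊤)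
  refine ⟨c₂, hc₂, fun ε hε hεε0 z => ?_⟩
  have hεT : ε * T ≤ ε0 * T := mul_le_mul_of_nonneg_right hεε0 (hr0.trans hT).le
  have hK : ∫⁻ ξ, Msup f ξ * ENNReal.ofReal (‖ξ‖ ^ p) ≤ K :=
    lintegral_mono fun ξ => by gcongr; linarith
  calc phiCap p ε T R f z ≤ Ftrunc ε T f (capTestFunction z) :=
        phiCap_le_Ftrunc_capTestFunction f z (hR.trans (by linarith))
    _ ≤ A * ENNReal.ofReal (‖z‖ ^ p) * ∫⁻ ξ, Msup f ξ * ENNReal.ofReal (‖ξ‖ ^ p) :=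
        Ftrunc_capTestFunction_le hp0 hhom hε z hεT
    _ ≤ A * K * ENNReal.ofReal (‖z‖ ^ p) := by rw [mul_right_comm]; gcongr
    _ ≤ ENNReal.ofReal (c₂ * ‖z‖ ^ p) := hle _ (by positivity)

/-- Upper growth bound `φ_{ε,T,R}(z) ≤ c₂ |z|^p`, uniformly for `0 < ε ≤ ε₀`. -/
theorem phiCap_upper_growth (d m : ℕ) (p : ℝ) (hp : 1 < p) (hpd : p < d)
    (T r0 lam0 ε0 R : ℝ) (hr0 : 0 < r0) (hT : r0 < T) (hε0 : 0 < ε0) (hR1 : 1 < R)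
    (hR : 2 ≤ R - ε0 * T) (hlam0 : 0 < lam0)
    (f : EuclideanSpace ℝ (Fin d) → EuclideanSpace ℝ (Fin m) → ℝ)
    (hfmeas : Measurable (Function.uncurry f))
    (hf0 : ∀ ξ z, 0 ≤ f ξ z)
    (hhom : ∀ ξ z (t : ℝ), 0 < t → f ξ (t • z) = t ^ p * f ξ z)
    (hG0 : ∀ ξ, ‖ξ‖ ≤ r0 → ∀ z : EuclideanSpace ℝ (Fin m), ‖z‖ = 1 → lam0 ≤ f ξ z)
    (hG1 : (∫⁻ ξ, Msup f ξ * ENNReal.ofReal (‖ξ‖ ^ p + 1)) < ⊤) :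
    ∃ c₂ : ℝ, 0 < c₂ ∧ ∀ (ε : ℝ), 0 < ε → ε ≤ ε0 →
      ∀ z : EuclideanSpace ℝ (Fin m),
        phiCap p ε T R f z ≤ ENNReal.ofReal (c₂ * ‖z‖ ^ p) :=
  phiCap_upper_growth_general d m p hp T r0 ε0 R hr0 hT hR f hhom hG1
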